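/- arXiv:1411.0944 — 3 statements merged into one kernel-verified Lean document; each statement's English description precedes it below -/
import Mathlib

section
/- Let v be a uniform complete simple game on N = {1,…,n}. Then the raw Deegan-Packel index satisfies the dominance property on v: for all players i, j with i ⊒ j one has DP^r_i(v) ≥ DP^r_j(v). -/
open scoped Classical

/-- A simple game on the player set `{1,…,n}` (modeled as `Fin n`):
a monotone map from coalitions to `{0,1}` (modeled as `Bool`) that is
`0` on the empty coalition and `1` on the grand coalition. -/
structure SimpleGame (n : ℕ) where
  win : Finset (Fin n) → Bool
  win_empty : win ∅ = false
  win_univ : win Finset.univ = true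
  win_mono : ∀ ⦃S T : Finset (Fin n)⦄, S ⊆ T → win S = true → win T = true

namespace SimpleGame

variable {n : ℕ}

/-- Player `i` dominates player `j`: `v((S ∪ {i}) \ {j}) ≥ v(S)` for every
coalition `S` with `j ∈ S` and `i ∉ S`. -/
def Dominates (v : SimpleGame n) (i j : Fin n) : Prop :=
  ∀ S : Finset (Fin n), j ∈ S → i ∉ S → v.win S ≤ v.win ((S ∪ {i}) \ {j})

/-- The game is complete if the dominance relation is a total preorder. -/
def IsComplete (v : SimpleGame n) : Prop :=
  (∀ i, v.Dominates i i) ∧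
  (∀ i j, v.Dominates i j ∨ v.Dominates j i) ∧
  (∀ i j k, v.Dominates i j → v.Dominates j k → v.Dominates i k)

/-- `S` is a minimal winning coalition: winning and every proper subset is losing. -/
def IsMWC (v : SimpleGame n) (S : Finset (Fin n)) : Prop :=
  v.win S = true ∧ ∀ T ⊂ S, v.win T = false

/-- `M_i`: the set of minimal winning coalitions containing player `i`. -/
noncomputable def Mset (v : SimpleGame n) (i : Fin n) : Finset (Finset (Fin n)) :=
  Finset.univ.filter fun S => v.IsMWC S ∧ i ∈ S

/-- `M_i(l)`: minimal winning coalitions of cardinality `l` containing `i`. -/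
noncomputable def Mlset (v : SimpleGame n) (i : Fin n) (l : ℕ) : Finset (Finset (Fin n)) :=
  (v.Mset i).filter fun S => S.card = l

/-- Raw Public Good index: `PGI^r_i(v) = |M_i|`. -/
noncomputable def PGI (v : SimpleGame n) (i : Fin n) : ℕ := (v.Mset i).card

/-- Raw Deegan-Packel index: `DP^r_i(v) = Σ_{S ∈ M_i} 1/|S|`. -/
noncomputable def DP (v : SimpleGame n) (i : Fin n) : ℝ :=
  ∑ S ∈ v.Mset i, (1 : ℝ) / (S.card : ℝ)

/-- The game is uniform if all minimal winning coalitions have the same cardinality. -/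
def IsUniform (v : SimpleGame n) : Prop :=
  ∀ S T, v.IsMWC S → v.IsMWC T → S.card = T.card

/-- `[q; w]` is a weighted representation of `v`. -/
def IsWeightedRep (v : SimpleGame n) (q : ℝ) (w : Fin n → ℝ) : Prop :=
  0 < q ∧ (∀ i, 0 ≤ w i) ∧ ∀ S : Finset (Fin n), v.win S = true ↔ q ≤ ∑ i ∈ S, w i

/-- The game is weighted. -/
def IsWeighted (v : SimpleGame n) : Prop := ∃ q w, v.IsWeightedRep q w

/-- `D_i`: coalitions decisive for player `i`. -/
noncomputable def Dset (v : SimpleGame n) (i : Fin n) : Finset (Finset (Fin n)) :=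
  Finset.univ.filter fun S => i ∈ S ∧ v.win S = true ∧ v.win (S.erase i) = false

/-- Raw Banzhaf index: `Bz^r_i(v) = |D_i|`. -/
noncomputable def Bz (v : SimpleGame n) (i : Fin n) : ℕ := (v.Dset i).card

/-- `S` is a shift-minimal winning coalition. -/
def IsSMWC (v : SimpleGame n) (S : Finset (Fin n)) : Prop :=
  v.IsMWC S ∧ ∀ i ∈ S, ∀ j ∉ S, v.Dominates i j → ¬ v.Dominates j i →
    v.win ((S \ {i}) ∪ {j}) = false

/-- `𝒮_i`: the set of shift-minimal winning coalitions containing player `i`. -/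
noncomputable def Sset (v : SimpleGame n) (i : Fin n) : Finset (Finset (Fin n)) :=
  Finset.univ.filter fun S => v.IsSMWC S ∧ i ∈ S

/-- Raw Shift index: `S^r_i(v) = |𝒮_i|`. -/
noncomputable def ShiftIdx (v : SimpleGame n) (i : Fin n) : ℕ := (v.Sset i).card

/-- The number of players for which the coalition `S` is decisive. -/
noncomputable def numDecisive (v : SimpleGame n) (S : Finset (Fin n)) : ℕ :=
  (Finset.univ.filter fun k => k ∈ S ∧ v.win S = true ∧ v.win (S.erase k) = false).card

/-- Raw Johnston index: `Jo^r_i(v) = Σ_{S ∈ D_i} 1/#{decisive players of S}`. -/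
noncomputable def Jo (v : SimpleGame n) (i : Fin n) : ℝ :=
  ∑ S ∈ v.Dset i, (1 : ℝ) / (v.numDecisive S : ℝ)

/-- `i` is a null player: it belongs to no minimal winning coalition. -/
def IsNull (v : SimpleGame n) (i : Fin n) : Prop := ∀ S, v.IsMWC S → i ∉ S

end SimpleGame

/-- A power index: assigns to every `n`-player simple game a vector in `ℝ^n`. -/
abbrev PowerIndex : Type := ∀ n : ℕ, SimpleGame n → Fin n → ℝ

/-- A class of games (one set of games for every number of players). -/
abbrev GameClass : Type := ∀ n : ℕ, Set (SimpleGame n)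

/-- Convex combination `P^α = Σ_h α_h P^h` of power indices. -/
noncomputable def convexComb {r : ℕ} (α : Fin r → ℝ) (P : Fin r → PowerIndex) : PowerIndex :=
  fun n v i => ∑ h, α h * P h n v i

/-- `Q` satisfies local monotonicity on the `n`-player games of `𝔊`. -/
def LMon (𝔊 : GameClass) (n : ℕ) (Q : PowerIndex) : Prop :=
  ∀ v ∈ 𝔊 n, ∀ i j : Fin n, v.Dominates i j → Q n v j ≤ Q n v i

/-- The cost of local monotonicity `c_𝒫(n,𝔊)`. -/
noncomputable def costLM {r : ℕ} [NeZero r] (P : Fin r → PowerIndex) (n : ℕ)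
    (𝔊 : GameClass) : ℝ :=
  sInf {β : ℝ | β ∈ Set.Icc (0 : ℝ) 1 ∧
    ∀ α ∈ stdSimplex ℝ (Fin r), β ≤ α 0 → LMon 𝔊 n (convexComb α P)}

/-- The raw Banzhaf index as a power index. -/
noncomputable def BzPI : PowerIndex := fun _ v i => (v.Bz i : ℝ)

/-- The raw Public Good index as a power index. -/
noncomputable def PGIPI : PowerIndex := fun _ v i => (v.PGI i : ℝ)

/-- The raw Shift index as a power index. -/
noncomputable def ShiftPI : PowerIndex := fun _ v i => (v.ShiftIdx i : ℝ)

/-- The raw Johnston index as a power index. -/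
noncomputable def JoPI : PowerIndex := fun _ v i => v.Jo i

/-- The raw Deegan-Packel index as a power index. -/
noncomputable def DPPI : PowerIndex := fun _ v i => v.DP i

/-- `𝔚`: the class of weighted games. -/
def WeightedClass : GameClass := fun _ => {v | v.IsWeighted}

/-!
The transposition of `i` and `j` maps `M_j` injectively into `M_i` and preserves sizes, which
gives `DP^r_j ≤ DP^r_i` term by term. A coalition `S ∈ M_j` containing `i` is fixed; otherwise
its image `(S ∪ {i}) \ {j}` wins because `i` dominates `j`, and it is minimal winning because
it has the common size of all minimal winning coalitions.
-/

namespace Finset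

variable {α : Type*} [DecidableEq α] {i j : α} {S : Finset α}

lemma map_swap_of_mem_of_mem (hi : i ∈ S) (hj : j ∈ S) :
    S.map (Equiv.swap i j).toEmbedding = S := by
  ext x
  simp only [mem_map_equiv, Equiv.symm_swap, Equiv.swap_apply_def]
  split_ifs <;> simp_all

lemma map_swap_of_not_mem_of_mem (hi : i ∉ S) (hj : j ∈ S) :
    S.map (Equiv.swap i j).toEmbedding = (S ∪ {i}) \ {j} := by
  ext x
  simp only [mem_map_equiv, Equiv.symm_swap, Equiv.swap_apply_def]
  split_ifs <;> grind

end Finset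

namespace SimpleGame

variable {n : ℕ} {v : SimpleGame n}

lemma exists_isMWC_subset {S : Finset (Fin n)} (hS : v.win S = true) :
    ∃ W ⊆ S, v.IsMWC W := by
  induction S using Finset.strongInduction with
  | _ S ih =>
    by_cases hmin : ∀ T ⊂ S, v.win T = false
    · exact ⟨S, subset_rfl, hS, hmin⟩
    · push Not at hmin
      obtain ⟨T, hTS, hT⟩ := hmin
      obtain ⟨W, hWT, hW⟩ := ih T hTS (by simpa using hT)
      exact ⟨W, hWT.trans hTS.subset, hW⟩

lemma mem_Mset {i : Fin n} {S : Finset (Fin n)} : S ∈ v.Mset i ↔ v.IsMWC S ∧ i ∈ S := by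
  simp [Mset]

lemma IsUniform.isMWC_of_card_le (huni : v.IsUniform) {S T : Finset (Fin n)}
    (hS : v.IsMWC S) (hT : v.win T = true) (hcard : T.card ≤ S.card) : v.IsMWC T := by
  obtain ⟨W, hWT, hW⟩ := exists_isMWC_subset hT
  have hWT_eq : W = T := Finset.eq_of_subset_of_card_le hWT (huni W S hW hS ▸ hcard)
  exact hWT_eq ▸ hW

lemma DP_le_of_map_mem_Mset {i j : Fin n} (e : Fin n ≃ Fin n)
    (he : ∀ S ∈ v.Mset j, S.map e.toEmbedding ∈ v.Mset i) : v.DP j ≤ v.DP i := by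
  unfold DP
  calc ∑ S ∈ v.Mset j, (1 : ℝ) / S.card
      = ∑ S ∈ (v.Mset j).map (Finset.mapEmbedding e.toEmbedding).toEmbedding,
          (1 : ℝ) / S.card := by simp
    _ ≤ ∑ S ∈ v.Mset i, (1 : ℝ) / S.card := by
        refine Finset.sum_le_sum_of_subset_of_nonneg ?_ fun _ _ _ => by positivity
        intro T hT
        obtain ⟨S, hS, rfl⟩ := Finset.mem_map.1 hT
        exact he S hS

lemma Dominates.map_swap_mem_Mset (huni : v.IsUniform) {i j : Fin n} (hdom : v.Dominates i j)
    {S : Finset (Fin n)} (hS : S ∈ v.Mset j) :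
    S.map (Equiv.swap i j).toEmbedding ∈ v.Mset i := by
  obtain ⟨hmwc, hjS⟩ := mem_Mset.1 hS
  by_cases hiS : i ∈ S
  · rw [Finset.map_swap_of_mem_of_mem hiS hjS]
    exact mem_Mset.2 ⟨hmwc, hiS⟩
  have hcard : (S.map (Equiv.swap i j).toEmbedding).card ≤ S.card := (Finset.card_map _).le
  rw [Finset.map_swap_of_not_mem_of_mem hiS hjS] at hcard ⊢
  have hwin : v.win ((S ∪ {i}) \ {j}) = true :=
    le_antisymm (Bool.le_true _) (hmwc.1 ▸ hdom S hjS hiS)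
  have hij : i ≠ j := fun h => hiS (h ▸ hjS)
  exact mem_Mset.2 ⟨huni.isMWC_of_card_le hmwc hwin hcard, by simp [hij]⟩

end SimpleGame

theorem dp_dominance_of_uniform_complete_general {n : ℕ} (v : SimpleGame n)
    (huni : v.IsUniform) (i j : Fin n)
    (hdom : v.Dominates i j) : v.DP j ≤ v.DP i :=
  v.DP_le_of_map_mem_Mset (Equiv.swap i j) fun _ => hdom.map_swap_mem_Mset huni

/-- For a uniform complete simple game, the raw Deegan-Packel index
satisfies the dominance property. -/
theorem dp_dominance_of_uniform_complete {n : ℕ} (v : SimpleGame n)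
    (hcomp : v.IsComplete) (huni : v.IsUniform) (i j : Fin n)
    (hdom : v.Dominates i j) : v.DP j ≤ v.DP i :=
  dp_dominance_of_uniform_complete_general v huni i j hdom
end

section
/- Let 𝔊 be a class of weighted games, n a positive integer, and 𝒫 = (P^1,…,P^r) with r ≥ 2 a collection of power indices on 𝔊 such that P^1 satisfies local monotonicity. Then c_𝒫(n,𝔊) = max{ c_{(P^1,P^j)}(n,𝔊) : 2 ≤ j ≤ r }. -/
open scoped Classical

/-
The admissible thresholds `β` for the whole collection are exactly the thresholds admissible for
every pair `(P^1, P^j)`. One inclusion embeds a pair's weights into the coordinates `1, j`. For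
the other, if `α_1 = t < 1` then `P^α = Σ_{j ≥ 2} α_j/(1 - t) · ((t, 1 - t) mixture of P^1, P^j)`,
a nonnegative combination of locally monotonic indices; if `t = 1` then `P^α = P^1`. Every set
of admissible thresholds is an up-closed subset of `[0, 1]` containing `1`, and for such sets
the infimum of an intersection is the maximum of the infima.
-/

open Finset

theorem csInf_biInter_eq_sup' {ι α : Type*} [ConditionallyCompleteLinearOrder α]
    [DenselyOrdered α] {s : Finset ι} (hs : s.Nonempty) {A : ι → Set α} {t : α}
    (ht : ∀ j ∈ s, t ∈ A j) (hbdd : ∀ j ∈ s, BddBelow (A j))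
    (hup : ∀ j ∈ s, ∀ γ ∈ A j, Set.Icc γ t ⊆ A j) :
    sInf (⋂ j ∈ s, A j) = s.sup' hs fun j => sInf (A j) := by
  have ht_mem : t ∈ ⋂ j ∈ s, A j := Set.mem_iInter₂.2 ht
  obtain ⟨j₀, hj₀⟩ := id hs
  have hbdd_inter : BddBelow (⋂ j ∈ s, A j) :=
    (hbdd j₀ hj₀).mono (Set.biInter_subset_of_mem hj₀)
  refine le_antisymm (le_of_forall_gt_imp_ge_of_dense fun c hc => ?_)
    (sup'_le _ _ fun j hj => csInf_le_csInf (hbdd j hj) ⟨t, ht_mem⟩ (Set.biInter_subset_of_mem hj))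
  rcases le_or_gt c t with hct | htc
  · refine csInf_le hbdd_inter (Set.mem_iInter₂.2 fun j hj => ?_)
    obtain ⟨γ, hγ, hγc⟩ := exists_lt_of_csInf_lt ⟨t, ht j hj⟩
      ((le_sup' (fun j => sInf (A j)) hj).trans_lt hc)
    exact hup j hj γ hγ ⟨hγc.le, hct⟩
  · exact (csInf_le hbdd_inter ht_mem).trans htc.le

theorem eq_single_of_one_le_of_mem_stdSimplex {ι : Type*} [Fintype ι] [DecidableEq ι]
    {α : ι → ℝ} (hα : α ∈ stdSimplex ℝ ι) {k : ι} (hk : 1 ≤ α k) : α = Pi.single k 1 := by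
  have hk_eq : α k = 1 := le_antisymm (mem_Icc_of_mem_stdSimplex hα k).2 hk
  have hrest : ∑ h ∈ univ.erase k, α h = 0 := by
    linarith [sum_erase_add univ α (mem_univ k), hα.2]
  funext h
  by_cases hhk : h = k
  · subst hhk; simpa using hk_eq
  · rw [Pi.single_eq_of_ne hhk]
    exact (sum_eq_zero_iff_of_nonneg fun x _ => hα.1 x).1 hrest h (mem_erase.2 ⟨hhk, mem_univ h⟩)

theorem LMon.sum_mul {𝔊 : GameClass} {n : ℕ} {ι : Type*} {s : Finset ι} {c : ι → ℝ}
    {Q : ι → PowerIndex} (hc : ∀ h ∈ s, 0 ≤ c h) (hQ : ∀ h ∈ s, LMon 𝔊 n (Q h)) :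
    LMon 𝔊 n fun m v i => ∑ h ∈ s, c h * Q h m v i :=
  fun v hv i j hij =>
    sum_le_sum fun h hh => mul_le_mul_of_nonneg_left (hQ h hh v hv i j hij) (hc h hh)

section ConvexComb

variable {r : ℕ} (P : Fin r → PowerIndex)

theorem convexComb_single (k : Fin r) : convexComb (Pi.single k 1) P = P k := by
  funext n v i
  simp [convexComb, Pi.single_apply]

theorem convexComb_single_add_single (k j : Fin r) (γ : Fin 2 → ℝ) :
    convexComb (Pi.single k (γ 0) + Pi.single j (γ 1)) P = convexComb γ ![P k, P j] := by
  funext n v i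
  simp [convexComb, add_mul, sum_add_distrib, Fin.sum_univ_two, Pi.single_apply]

theorem single_add_single_mem_stdSimplex (k j : Fin r) {γ : Fin 2 → ℝ}
    (hγ : γ ∈ stdSimplex ℝ (Fin 2)) :
    Pi.single k (γ 0) + Pi.single j (γ 1) ∈ stdSimplex ℝ (Fin r) := by
  have hk : 0 ≤ Pi.single (M := fun _ => ℝ) k (γ 0) := Pi.single_nonneg.2 (hγ.1 0)
  have hj : 0 ≤ Pi.single (M := fun _ => ℝ) j (γ 1) := Pi.single_nonneg.2 (hγ.1 1)
  refine ⟨fun h => add_nonneg (hk h) (hj h), ?_⟩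
  simpa [sum_add_distrib, Fin.sum_univ_two] using hγ.2

theorem convexComb_eq_sum_pairs [NeZero r] {α : Fin r → ℝ} (hα : ∑ h, α h = 1)
    (h0 : α 0 < 1) :
    convexComb α P = fun n v i =>
      ∑ h ∈ univ.erase 0, α h / (1 - α 0) * convexComb ![α 0, 1 - α 0] ![P 0, P h] n v i := by
  have hpos : 0 < 1 - α 0 := sub_pos.2 h0
  have hrest : ∑ h ∈ univ.erase 0, α h = 1 - α 0 := by
    linarith [sum_erase_add univ α (mem_univ 0)]
  funext n v i
  have hsplit : ∀ h, α h / (1 - α 0) * convexComb ![α 0, 1 - α 0] ![P 0, P h] n v i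
      = α h / (1 - α 0) * (α 0 * P 0 n v i) + α h * P h n v i := fun h => by
    simp only [convexComb, Fin.sum_univ_two]
    field_simp
    simp
  rw [sum_congr rfl fun h _ => hsplit h, sum_add_distrib, ← sum_mul, ← sum_div, hrest,
    div_self hpos.ne', one_mul, convexComb, ← sum_erase_add univ _ (mem_univ 0), add_comm]

end ConvexComb

section Thresholds

variable {r : ℕ} [NeZero r] {P : Fin r → PowerIndex} {n : ℕ} {𝔊 : GameClass}

variable (P n 𝔊) in
def lmThresholds : Set ℝ :=
  {β : ℝ | β ∈ Set.Icc (0 : ℝ) 1 ∧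
    ∀ α ∈ stdSimplex ℝ (Fin r), β ≤ α 0 → LMon 𝔊 n (convexComb α P)}

theorem costLM_eq_sInf_lmThresholds : costLM P n 𝔊 = sInf (lmThresholds P n 𝔊) := rfl

theorem bddBelow_lmThresholds : BddBelow (lmThresholds P n 𝔊) := ⟨0, fun _ hβ => hβ.1.1⟩

theorem Icc_subset_lmThresholds {γ : ℝ} (hγ : γ ∈ lmThresholds P n 𝔊) :
    Set.Icc γ 1 ⊆ lmThresholds P n 𝔊 :=
  fun _ hβ => ⟨⟨hγ.1.1.trans hβ.1, hβ.2⟩, fun α hα hβα => hγ.2 α hα (hβ.1.trans hβα)⟩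

theorem one_mem_lmThresholds (hP0 : LMon 𝔊 n (P 0)) : (1 : ℝ) ∈ lmThresholds P n 𝔊 :=
  ⟨⟨zero_le_one, le_rfl⟩, fun α hα h1 => by
    rwa [eq_single_of_one_le_of_mem_stdSimplex hα h1, convexComb_single]⟩

theorem lmThresholds_subset_pair {j : Fin r} (hj : j ≠ 0) :
    lmThresholds P n 𝔊 ⊆ lmThresholds ![P 0, P j] n 𝔊 := fun _ ⟨hβ, hLM⟩ =>
  ⟨hβ, fun γ hγ hβγ => by
    rw [← convexComb_single_add_single]
    exact hLM _ (single_add_single_mem_stdSimplex 0 j hγ) (by simpa [hj.symm] using hβγ)⟩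

theorem lMon_convexComb_of_mem_pairs (hP0 : LMon 𝔊 n (P 0)) {α : Fin r → ℝ}
    (hα : α ∈ stdSimplex ℝ (Fin r)) {β : ℝ} (hβα : β ≤ α 0)
    (hpairs : ∀ j ≠ 0, β ∈ lmThresholds ![P 0, P j] n 𝔊) : LMon 𝔊 n (convexComb α P) := by
  rcases (mem_Icc_of_mem_stdSimplex hα 0).2.lt_or_eq with hlt | heq
  · rw [convexComb_eq_sum_pairs P hα.2 hlt]
    have hpair_mem : ![α 0, 1 - α 0] ∈ stdSimplex ℝ (Fin 2) :=
      ⟨Fin.forall_fin_two.2 ⟨hα.1 0, sub_nonneg.2 hlt.le⟩, by simp⟩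
    exact LMon.sum_mul (fun h _ => div_nonneg (hα.1 h) (sub_nonneg.2 hlt.le))
      fun h hh => (hpairs h (ne_of_mem_erase hh)).2 _ hpair_mem hβα
  · rwa [eq_single_of_one_le_of_mem_stdSimplex hα heq.ge, convexComb_single]

theorem lmThresholds_eq_biInter_pairs (hr : 2 ≤ r) (hP0 : LMon 𝔊 n (P 0)) :
    lmThresholds P n 𝔊 = ⋂ j ∈ univ.filter (· ≠ 0), lmThresholds ![P 0, P j] n 𝔊 := by
  ext β
  simp only [Set.mem_iInter₂, mem_filter, mem_univ, true_and]
  refine ⟨fun hβ j hj => lmThresholds_subset_pair hj hβ, fun hpairs => ?_⟩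
  have hβ_Icc := (hpairs ⟨1, hr⟩ (Fin.ne_of_val_ne one_ne_zero)).1
  exact ⟨hβ_Icc, fun α hα hβα => lMon_convexComb_of_mem_pairs hP0 hα hβα hpairs⟩

end Thresholds

/-- the cost of local monotonicity of a collection `𝒫 = (P^1,…,P^r)`
(with `r ≥ 2` and `P^1` locally monotonic) equals the maximum of the costs of the
two-element subcollections `(P^1, P^j)`, `2 ≤ j ≤ r`. -/
theorem costLM_eq_max_pairs {r : ℕ} [NeZero r] (hr : 2 ≤ r) (n : ℕ) (𝔊 : GameClass)
    (P : Fin r → PowerIndex) (hP1 : LMon 𝔊 n (P 0)) :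
    costLM P n 𝔊 =
      Finset.sup' (Finset.univ.filter fun j : Fin r => j ≠ 0)
        ⟨⟨1, by omega⟩, by rw [Finset.mem_filter]; exact ⟨Finset.mem_univ _, fun h => by simpa using congrArg Fin.val h⟩⟩
        (fun j => costLM ![P 0, P j] n 𝔊) := by
  rw [costLM_eq_sInf_lmThresholds, lmThresholds_eq_biInter_pairs hr hP1]
  exact csInf_biInter_eq_sup' _ (fun _ _ => one_mem_lmThresholds hP1)
    (fun _ _ => bddBelow_lmThresholds) (fun _ _ _ => Icc_subset_lmThresholds)
end

section
/- The cost of local monotonicity on the class 𝔚 of weighted games tends to 1 as the number of players tends to infinity, for each of the collections (Bz^r, PGI^r), (Bz^r, S^r), and (Bz^r, PGI^r, S^r): lim_{n→∞} c_{(Bz^r,PGI^r)}(n,𝔚) = lim_{n→∞} c_{(Bz^r,S^r)}(n,𝔚) = lim_{n→∞} c_{(Bz^r,PGI^r,S^r)}(n,𝔚) = 1. -/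
open scoped Classical

/-!
Putting all weight on `Bz^r` gives a locally monotone index, so the cost is at most `1`.
Conversely, in the weighted game `[3; 2, 1, …, 1]` with `m + 2` players, player `0` dominates
player `1`, yet `Bz^r_0 - Bz^r_1 = 2m` while `PGI^r_1 - PGI^r_0 = m(m-3)/2`, and `S^r = PGI^r`
there because every minimal winning coalition is shift-minimal. Hence `β Bz^r + (1-β) PGI^r`
violates local monotonicity whenever `β < 1 - 4/(m+1)`, and this bound tends to `1`.
-/

open Finset Filter Topology

namespace SimpleGame

variable {n : ℕ}

lemma dominates_iff {v : SimpleGame n} {i j : Fin n} :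
    v.Dominates i j ↔ ∀ S : Finset (Fin n), j ∈ S → i ∉ S →
      v.win S = true → v.win (insert i (S.erase j)) = true := by
  refine forall_congr' fun S => imp_congr_right fun hj => forall_congr' fun hi => ?_
  have hij : i ≠ j := by rintro rfl; exact hi hj
  rw [Bool.le_iff_imp, union_comm, ← insert_eq, sdiff_singleton_eq_erase,
    erase_insert_of_ne hij]

def swapIn (i j : Fin n) (S : Finset (Fin n)) : Finset (Fin n) :=
  if i ∈ S then S else insert i (S.erase j)

lemma swapIn_swapIn {i j : Fin n} (hij : i ≠ j) {S : Finset (Fin n)} (hj : j ∈ S) :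
    swapIn j i (swapIn i j S) = S := by
  by_cases hi : i ∈ S
  · simp [swapIn, hi, hj]
  · have hi' : i ∉ S.erase j := fun h => hi (mem_of_mem_erase h)
    simp [swapIn, hi, hij.symm, erase_insert hi', insert_erase hj]

lemma swapIn_mem_Dset {v : SimpleGame n} {i j : Fin n} (hij : i ≠ j) (h : v.Dominates i j)
    {S : Finset (Fin n)} (hS : S ∈ v.Dset j) : swapIn i j S ∈ v.Dset i := by
  simp only [Dset, mem_filter, mem_univ, true_and] at hS ⊢
  obtain ⟨hj, hwin, hlose⟩ := hS
  by_cases hi : i ∈ S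
  · simp only [swapIn, if_pos hi]
    refine ⟨hi, hwin, Bool.eq_false_iff.2 fun hwin' => ?_⟩
    have := dominates_iff.1 h _ (mem_erase.2 ⟨hij.symm, hj⟩) (notMem_erase i S) hwin'
    rw [← erase_insert_of_ne hij, insert_erase hi, hlose] at this
    exact Bool.false_ne_true this
  · have hi' : i ∉ S.erase j := fun h => hi (mem_of_mem_erase h)
    simp only [swapIn, if_neg hi]
    exact ⟨mem_insert_self i _, dominates_iff.1 h _ hj hi hwin, by rwa [erase_insert hi']⟩

theorem Bz_le_Bz_of_dominates (v : SimpleGame n) {i j : Fin n} (h : v.Dominates i j) :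
    v.Bz j ≤ v.Bz i := by
  rcases eq_or_ne i j with rfl | hij
  · exact le_rfl
  refine card_le_card_of_injOn (swapIn i j) (fun S hS => swapIn_mem_Dset hij h hS) ?_
  refine Set.LeftInvOn.injOn (f₁' := swapIn j i) fun S hS => swapIn_swapIn hij ?_
  exact (mem_filter.1 hS).2.1

lemma isMWC_iff_forall_erase (v : SimpleGame n) (S : Finset (Fin n)) :
    v.IsMWC S ↔ v.win S = true ∧ ∀ k ∈ S, v.win (S.erase k) = false := by
  refine and_congr_right fun _ => ⟨fun h k hk => h _ (erase_ssubset hk), fun h T hT => ?_⟩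
  obtain ⟨k, hk, hTk⟩ := ssubset_iff_exists_subset_erase.1 hT
  exact Bool.eq_false_iff.2 fun hwin => by simpa [h k hk] using v.win_mono hTk hwin

def ofWeights (q : ℕ) (w : Fin n → ℕ) (hq : 0 < q) (hN : q ≤ ∑ i, w i) : SimpleGame n where
  win S := decide (q ≤ ∑ i ∈ S, w i)
  win_empty := by simpa using hq.ne'
  win_univ := by simpa using hN
  win_mono S T hST h := by
    simp only [decide_eq_true_eq] at h ⊢
    exact h.trans (sum_le_sum_of_subset hST)

section ofWeights

variable {q : ℕ} {w : Fin n → ℕ} {hq : 0 < q} {hN : q ≤ ∑ i, w i}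

lemma ofWeights_win {S : Finset (Fin n)} :
    (ofWeights q w hq hN).win S = true ↔ q ≤ ∑ i ∈ S, w i := by
  simp [ofWeights]

lemma isWeighted_ofWeights : (ofWeights q w hq hN).IsWeighted :=
  ⟨q, fun i => w i, by exact_mod_cast hq, fun i => by positivity, fun S => by
    rw [ofWeights_win, ← Nat.cast_sum, Nat.cast_le]⟩

lemma dominates_ofWeights {i j : Fin n} (h : w j ≤ w i) :
    (ofWeights q w hq hN).Dominates i j := by
  refine dominates_iff.2 fun S hj hi hS => ?_
  rw [ofWeights_win, sum_insert fun h => hi (mem_of_mem_erase h)] at *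
  have := add_sum_erase S w hj
  omega

end ofWeights

section heavyGame

variable {m : ℕ}

def heavyWeight (m : ℕ) (i : Fin (m + 2)) : ℕ := if i = 0 then 2 else 1

lemma sum_heavyWeight (S : Finset (Fin (m + 2))) :
    ∑ i ∈ S, heavyWeight m i = #S + if 0 ∈ S then 1 else 0 := by
  have h1 (i : Fin (m + 2)) : heavyWeight m i = 1 + if i = 0 then 1 else 0 := by
    unfold heavyWeight; split_ifs <;> rfl
  simp [h1, sum_add_distrib, sum_ite_eq']

def heavyGame (m : ℕ) : SimpleGame (m + 2) :=
  ofWeights 3 (heavyWeight m) (by norm_num) (by simp [sum_heavyWeight])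

lemma heavyGame_win {S : Finset (Fin (m + 2))} :
    (heavyGame m).win S = true ↔ 3 ≤ #S + if 0 ∈ S then 1 else 0 := by
  rw [heavyGame, ofWeights_win, sum_heavyWeight]

lemma heavyGame_dominates {i j : Fin (m + 2)} (h : i = 0 ∨ j ≠ 0) :
    (heavyGame m).Dominates i j :=
  dominates_ofWeights (by unfold heavyWeight; split_ifs <;> simp_all)

lemma heavyGame_win_erase {S : Finset (Fin (m + 2))} {k : Fin (m + 2)} (hk : k ∈ S) :
    (heavyGame m).win (S.erase k) = true ↔ 3 ≤ #S - 1 + if 0 ∈ S ∧ k ≠ 0 then 1 else 0 := by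
  simp only [heavyGame_win, card_erase_of_mem hk, mem_erase, ne_comm, and_comm]

lemma heavyGame_isMWC_iff {S : Finset (Fin (m + 2))} :
    (heavyGame m).IsMWC S ↔ #S = if 0 ∈ S then 2 else 3 := by
  simp_rw [isMWC_iff_forall_erase, ← Bool.not_eq_true]
  constructor
  · rintro ⟨hwin, hmin⟩
    rw [heavyGame_win] at hwin
    obtain ⟨k, hk, hk0⟩ := exists_mem_ne (s := S) (by split_ifs at hwin <;> omega) 0
    have := hmin k hk
    rw [heavyGame_win_erase hk] at this
    split_ifs at * <;> simp_all <;> omega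
  · intro hcard
    refine ⟨by rw [heavyGame_win]; split_ifs at * <;> omega, fun k hk => ?_⟩
    rw [heavyGame_win_erase hk]
    split_ifs at * <;> simp_all

lemma heavyGame_mem_Dset_zero {S : Finset (Fin (m + 2))} :
    S ∈ (heavyGame m).Dset 0 ↔ 0 ∈ S ∧ (#S = 2 ∨ #S = 3) := by
  simp only [Dset, mem_filter, mem_univ, true_and, ← Bool.not_eq_true]
  refine and_congr_right fun h0 => ?_
  rw [heavyGame_win, heavyGame_win_erase h0, if_pos h0, if_neg fun h => h.2 rfl]
  omega

lemma heavyGame_Dset_one : (heavyGame m).Dset 1 = (heavyGame m).Mset 1 := by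
  ext S
  simp only [Dset, Mset, mem_filter, mem_univ, true_and, ← Bool.not_eq_true,
    heavyGame_isMWC_iff]
  rw [and_comm, and_congr_left_iff]
  intro h1
  rw [heavyGame_win, heavyGame_win_erase h1]
  split_ifs <;> simp_all <;> omega

lemma heavyGame_isSMWC_iff {S : Finset (Fin (m + 2))} :
    (heavyGame m).IsSMWC S ↔ (heavyGame m).IsMWC S := by
  refine ⟨And.left, fun hS => ⟨hS, fun i hi j hj _ hji => ?_⟩⟩
  obtain rfl : i = 0 := by_contra fun hi0 => hji (heavyGame_dominates (Or.inr hi0))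
  have hj0 : j ≠ 0 := by rintro rfl; exact hj hi
  rw [heavyGame_isMWC_iff, if_pos hi] at hS
  rw [← Bool.not_eq_true, heavyGame_win, union_comm, ← insert_eq, sdiff_singleton_eq_erase,
    card_insert_of_notMem (by simp [hj]), card_erase_of_mem hi, if_neg (by simp [hj0.symm])]
  omega

lemma heavyGame_ShiftIdx (i : Fin (m + 2)) :
    (heavyGame m).ShiftIdx i = (heavyGame m).PGI i := by
  simp only [ShiftIdx, Sset, PGI, Mset, heavyGame_isSMWC_iff]

lemma heavyGame_PGI_zero : (heavyGame m).PGI 0 = m + 1 := by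
  have hM : (heavyGame m).Mset 0 = (univ.powersetCard 2).filter ({0} ⊆ ·) := by
    ext S
    by_cases h0 : 0 ∈ S <;> simp [Mset, heavyGame_isMWC_iff, h0]
  rw [PGI, hM, card_filter_powersetCard_subset _ _ _ (subset_univ _) (by simp)]
  simp

lemma heavyGame_PGI_one : (heavyGame m).PGI 1 = 1 + m.choose 2 := by
  have hM : (heavyGame m).Mset 1 = (univ.powersetCard 2).filter ({0, 1} ⊆ ·) ∪
      ((univ.erase 0).powersetCard 3).filter ({1} ⊆ ·) := by
    ext S
    by_cases h0 : 0 ∈ S <;>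
      simp [Mset, heavyGame_isMWC_iff, h0, insert_subset_iff, subset_erase]
  rw [PGI, hM, card_union_of_disjoint,
    card_filter_powersetCard_subset _ _ _ (subset_univ _) (by simp),
    card_filter_powersetCard_subset _ _ _ (by simp) (by simp)]
  · simp
  · exact disjoint_left.2 fun S h01 h1 => by simp_all [insert_subset_iff, subset_erase]

lemma heavyGame_Bz_zero : (heavyGame m).Bz 0 = m + 1 + (m + 1).choose 2 := by
  have hD : (heavyGame m).Dset 0 = (univ.powersetCard 2).filter ({0} ⊆ ·) ∪
      (univ.powersetCard 3).filter ({0} ⊆ ·) := by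
    ext S
    simp only [heavyGame_mem_Dset_zero, singleton_subset_iff, mem_union, mem_filter,
      mem_powersetCard, subset_univ, true_and]
    tauto
  rw [Bz, hD, card_union_of_disjoint,
    card_filter_powersetCard_subset _ _ _ (subset_univ _) (by simp),
    card_filter_powersetCard_subset _ _ _ (subset_univ _) (by simp)]
  · simp
  · exact disjoint_filter_filter (pairwise_disjoint_powersetCard _ (by decide))

lemma heavyGame_Bz_one : (heavyGame m).Bz 1 = (heavyGame m).PGI 1 := by
  rw [Bz, PGI, heavyGame_Dset_one]

lemma heavyGame_combination_lt {β : ℝ} (hβ : 0 ≤ β) (hlt : β < 1 - 4 / ((m : ℝ) + 1)) :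
    β * (heavyGame m).Bz 0 + (1 - β) * (heavyGame m).PGI 0 <
      β * (heavyGame m).Bz 1 + (1 - β) * (heavyGame m).PGI 1 := by
  have hm : (0 : ℝ) < m + 1 := by positivity
  rw [lt_sub_iff_add_lt, ← lt_sub_iff_add_lt', div_lt_iff₀ hm] at hlt
  rw [heavyGame_Bz_one, heavyGame_Bz_zero, heavyGame_PGI_zero, heavyGame_PGI_one]
  push_cast [Nat.cast_choose_two]
  have hm3 : (3 : ℝ) < m := by nlinarith
  nlinarith [mul_lt_mul_of_pos_left hlt (by linarith : (0 : ℝ) < m)]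

end heavyGame

end SimpleGame

section CostLM

variable {r : ℕ} [NeZero r] {P : Fin r → PowerIndex} {𝔊 : GameClass} {n : ℕ}

lemma LMon.convexComb_of_one_le (hP : LMon 𝔊 n (P 0)) {α : Fin r → ℝ}
    (hα : α ∈ stdSimplex ℝ (Fin r)) (h1 : 1 ≤ α 0) : LMon 𝔊 n (convexComb α P) := by
  have hα0 : ∀ h ≠ 0, α h = 0 := fun h hh => by
    have hsum := add_sum_erase univ α (mem_univ 0)
    have := single_le_sum (fun k _ => hα.1 k) (mem_erase.2 ⟨hh, mem_univ h⟩)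
    linarith [hα.1 h, hα.2]
  have hcomb (v : SimpleGame n) (i : Fin n) : convexComb α P n v i = P 0 n v i := by
    rw [convexComb, sum_eq_single 0 (fun h _ hh => by rw [hα0 h hh, zero_mul]) (by simp),
      le_antisymm (mem_Icc_of_mem_stdSimplex hα 0).2 h1, one_mul]
  intro v hv i j hij
  simpa only [hcomb] using hP v hv i j hij

lemma one_mem_costLM_set (hP : LMon 𝔊 n (P 0)) :
    (1 : ℝ) ∈ {β : ℝ | β ∈ Set.Icc (0 : ℝ) 1 ∧
      ∀ α ∈ stdSimplex ℝ (Fin r), β ≤ α 0 → LMon 𝔊 n (convexComb α P)} :=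
  ⟨⟨zero_le_one, le_rfl⟩, fun _ hα => hP.convexComb_of_one_le hα⟩

lemma costLM_le_one (hP : LMon 𝔊 n (P 0)) : costLM P n 𝔊 ≤ 1 :=
  csInf_le ⟨0, fun _ hβ => hβ.1.1⟩ (one_mem_costLM_set hP)

lemma le_costLM (hP : LMon 𝔊 n (P 0)) {b : ℝ}
    (h : ∀ β ∈ Set.Icc (0 : ℝ) 1, β < b →
      ∃ α ∈ stdSimplex ℝ (Fin r), β ≤ α 0 ∧ ¬ LMon 𝔊 n (convexComb α P)) :
    b ≤ costLM P n 𝔊 :=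
  le_csInf ⟨1, one_mem_costLM_set hP⟩ fun β ⟨hβ, hLM⟩ => not_lt.1 fun hlt => by
    obtain ⟨α, hα, hle, hnot⟩ := h β hβ hlt
    exact hnot (hLM α hα hle)

end CostLM

lemma lMon_BzPI {𝔊 : GameClass} {n : ℕ} : LMon 𝔊 n BzPI :=
  fun v _ _ _ h => Nat.cast_le.2 (v.Bz_le_Bz_of_dominates h)

section Weighted

open SimpleGame

variable {r : ℕ} [NeZero r] {P : Fin r → PowerIndex}

def MixesBzPGIOnHeavyGame (P : Fin r → PowerIndex) : Prop :=
  ∀ (m : ℕ) (β : ℝ), β ∈ Set.Icc (0 : ℝ) 1 → ∃ α ∈ stdSimplex ℝ (Fin r), α 0 = β ∧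
    ∀ i, convexComb α P (m + 2) (heavyGame m) i =
      β * (heavyGame m).Bz i + (1 - β) * (heavyGame m).PGI i

lemma one_sub_le_costLM (hP : P 0 = BzPI) (hmix : MixesBzPGIOnHeavyGame P) (m : ℕ) :
    1 - 4 / ((m : ℝ) + 1) ≤ costLM P (m + 2) WeightedClass := by
  refine le_costLM (hP ▸ lMon_BzPI) fun β hβ hlt => ?_
  obtain ⟨α, hα, hα0, hval⟩ := hmix m β hβ
  refine ⟨α, hα, hα0.ge, fun hLM => ?_⟩
  have := hLM (heavyGame m) isWeighted_ofWeights 0 1 (heavyGame_dominates (Or.inl rfl))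
  rw [hval, hval] at this
  exact this.not_gt (heavyGame_combination_lt hβ.1 hlt)

theorem tendsto_costLM_weightedClass (hP : P 0 = BzPI) (hmix : MixesBzPGIOnHeavyGame P) :
    Tendsto (fun n => costLM P n WeightedClass) atTop (𝓝 1) := by
  have hlow : Tendsto (fun m : ℕ => 1 - 4 / ((m : ℝ) + 1)) atTop (𝓝 1) := by
    simpa [div_eq_mul_inv] using
      (tendsto_one_div_add_atTop_nhds_zero_nat.const_mul (4 : ℝ)).const_sub (1 : ℝ)
  rw [← tendsto_add_atTop_iff_nat 2]
  exact tendsto_of_tendsto_of_tendsto_of_le_of_le hlow tendsto_const_nhds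
    (one_sub_le_costLM hP hmix) fun n => costLM_le_one (hP ▸ lMon_BzPI)

end Weighted

lemma mem_stdSimplex_fin_two {β : ℝ} (hβ : β ∈ Set.Icc (0 : ℝ) 1) :
    ![β, 1 - β] ∈ stdSimplex ℝ (Fin 2) :=
  ⟨Fin.forall_fin_two.2 ⟨hβ.1, sub_nonneg.2 hβ.2⟩, by simp⟩

lemma mem_stdSimplex_fin_three {β : ℝ} (hβ : β ∈ Set.Icc (0 : ℝ) 1) :
    ![β, 1 - β, 0] ∈ stdSimplex ℝ (Fin 3) :=
  ⟨fun i => by fin_cases i <;> simp [hβ.1, hβ.2], by simp [Fin.sum_univ_three]⟩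

/-- the cost of local monotonicity on weighted games tends to `1`
as the number of players tends to infinity, for `(Bz^r, PGI^r)`, `(Bz^r, S^r)`
and `(Bz^r, PGI^r, S^r)`. -/
theorem costLM_tendsto_one :
    Filter.Tendsto (fun n => costLM ![BzPI, PGIPI] n WeightedClass)
      Filter.atTop (nhds 1) ∧
    Filter.Tendsto (fun n => costLM ![BzPI, ShiftPI] n WeightedClass)
      Filter.atTop (nhds 1) ∧
    Filter.Tendsto (fun n => costLM ![BzPI, PGIPI, ShiftPI] n WeightedClass)
      Filter.atTop (nhds 1) := by
  refine ⟨tendsto_costLM_weightedClass rfl fun m β hβ => ?_,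
    tendsto_costLM_weightedClass rfl fun m β hβ => ?_,
    tendsto_costLM_weightedClass rfl fun m β hβ => ?_⟩
  · exact ⟨![β, 1 - β], mem_stdSimplex_fin_two hβ, rfl, fun i => by
      simp [convexComb, BzPI, PGIPI]⟩
  · exact ⟨![β, 1 - β], mem_stdSimplex_fin_two hβ, rfl, fun i => by
      simp [convexComb, BzPI, ShiftPI, SimpleGame.heavyGame_ShiftIdx]⟩
  · exact ⟨![β, 1 - β, 0], mem_stdSimplex_fin_three hβ, rfl, fun i => by
      simp only [convexComb, Fin.sum_univ_three, Matrix.cons_val_zero, Matrix.cons_val_one,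
        Matrix.cons_val_two, Matrix.vecHead, Matrix.vecTail]
      simp [BzPI, PGIPI]⟩
end
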